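/- Let V be a finite-dimensional vector space over a field of characteristic 0 and N : V → V a nilpotent linear map. Then there exists a unique finite increasing filtration M = (M_w)_{w ∈ ℤ} on V such that N(M_w) ⊆ M_{w-2} for all w and such that for every m ≥ 0 the induced map N^m : gr^M_m → gr^M_{-m} is an isomorphism. -/

import Mathlib

/-!
Deligne's induction on the nilpotency index, run for subquotients `U / K` of `V` with `K ≤ U`
both `N`-stable. If `N ^ (k + 1)` kills `U / K`, the conditions on `gr_{±m}` for `m > k` force
`M_w = U` for `w ≥ k` and `M_w = K` for `w < -k`, and then those on `gr_{±k}` force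
`M_{k-1} = U ∩ (N^k)⁻¹ K` and `M_{-k} = K + N^k U`. Hence, if `N ^ (k + 2)` kills `U / K`, the
weights `[-k-1, k]` of `M` form a monodromy filtration of `U' / K'`, where
`U' = U ∩ (N^{k+1})⁻¹ K` and `K' = K + N^{k+1} U`, a subquotient killed by `N ^ (k + 1)`;
conversely every monodromy filtration of `U' / K'` extends by `U` above and `K` below. Existence
and uniqueness follow by induction on `k`, starting from `N U ⊆ K`, where the only weight is `0`.
-/

open Submodule

/-- `M` is a finite increasing filtration on `V`. -/
def IsFiltrationFin {E V : Type*} [Field E] [AddCommGroup V] [Module E V]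
    (M : ℤ → Submodule E V) : Prop :=
  Monotone M ∧ (∃ a : ℤ, ∀ w ≤ a, M w = ⊥) ∧ (∃ b : ℤ, ∀ w : ℤ, b ≤ w → M w = ⊤)

/-- `M` is the monodromy weight filtration of the nilpotent operator `N`:
`M` is a finite increasing filtration with `N (M_w) ⊆ M_{w-2}` and, for every `m ≥ 0`,
`N^m` induces an isomorphism `gr^M_m → gr^M_{-m}` (expressed without quotients:
injectivity and surjectivity modulo the lower steps of the filtration). -/
def IsMonodromyFiltration {E V : Type*} [Field E] [AddCommGroup V] [Module E V]
    (N : V →ₗ[E] V) (M : ℤ → Submodule E V) : Prop :=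
  IsFiltrationFin M ∧
  (∀ w : ℤ, (M w).map N ≤ M (w - 2)) ∧
  (∀ m : ℕ,
    (∀ x ∈ M (m : ℤ), (N ^ m) x ∈ M (-(m : ℤ) - 1) → x ∈ M ((m : ℤ) - 1)) ∧
    (∀ y ∈ M (-(m : ℤ)), ∃ x ∈ M (m : ℤ), y - (N ^ m) x ∈ M (-(m : ℤ) - 1)))

open Module.End

theorem Monotone.eq_of_forall_gt_le_sub_one {α : Type*} [PartialOrder α] {f : ℤ → α}
    (hf : Monotone f) {a : ℤ} (h : ∀ w, a < w → f w ≤ f (w - 1)) {w : ℤ} (hw : a ≤ w) :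
    f w = f a := by
  induction w, hw using Int.leInduction with
  | base => rfl
  | succ n hn ih =>
    exact le_antisymm ((h (n + 1) (by omega)).trans (by simp [ih])) (ih ▸ hf (by omega))

theorem Monotone.eq_of_forall_le_le_sub_one {α : Type*} [PartialOrder α] {f : ℤ → α}
    (hf : Monotone f) {a : ℤ} (h : ∀ w ≤ a, f w ≤ f (w - 1)) {w : ℤ} (hw : w ≤ a) :
    f w = f a := by
  induction w, hw using Int.leInductionDown with
  | base => rfl
  | pred n hn ih => exact le_antisymm (hf (by omega)) (ih ▸ h n hn)

theorem Submodule.map_inf_comap_le_sup_map {R V W : Type*} [Semiring R] [AddCommMonoid V]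
    [AddCommMonoid W] [Module R V] [Module R W] (f : V →ₗ[R] W) (K : Submodule R W)
    (U : Submodule R V) : (U ⊓ K.comap f).map f ≤ K ⊔ U.map f :=
  (map_le_iff_le_comap.mpr inf_le_right).trans le_sup_left

section Invariant

variable {R V : Type*} [Semiring R] [AddCommMonoid V] [Module R V] {N : Module.End R V}
  {K U : Submodule R V}

theorem Module.End.pow_apply_mem_of_mem_invtSubmodule (hK : K ∈ N.invtSubmodule) (i : ℕ)
    {x : V} (hx : x ∈ K) : (N ^ i) x ∈ K := by
  rw [coe_pow]
  exact Set.MapsTo.iterate hK i hx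

theorem Module.End.pow_apply_mem_of_map_pow_le (hK : K ∈ N.invtSubmodule) {j m : ℕ}
    (hj : U.map (N ^ j) ≤ K) (hjm : j ≤ m) {x : V} (hx : x ∈ U) : (N ^ m) x ∈ K := by
  rw [← Nat.sub_add_cancel hjm, pow_add, mul_apply]
  exact pow_apply_mem_of_mem_invtSubmodule hK _ (hj (Submodule.mem_map_of_mem hx))

theorem Module.End.sup_map_pow_mem_invtSubmodule (hK : K ∈ N.invtSubmodule)
    (hU : U ∈ N.invtSubmodule) (j : ℕ) : K ⊔ U.map (N ^ j) ∈ N.invtSubmodule := by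
  refine invtSubmodule.sup_mem hK ?_
  rintro _ ⟨x, hx, rfl⟩
  exact ⟨N x, hU hx, by rw [← mul_apply, pow_mul_comm', mul_apply]⟩

theorem Module.End.inf_comap_pow_mem_invtSubmodule (hK : K ∈ N.invtSubmodule)
    (hU : U ∈ N.invtSubmodule) (j : ℕ) : U ⊓ K.comap (N ^ j) ∈ N.invtSubmodule := by
  refine invtSubmodule.inf_mem hU ?_
  intro x (hx : (N ^ j) x ∈ K)
  change (N ^ j) (N x) ∈ K
  rw [← mul_apply, pow_mul_comm', mul_apply]
  exact hK hx

theorem Module.End.sup_map_pow_le_inf_comap_pow (hKU : K ≤ U) (hK : K ∈ N.invtSubmodule)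
    (hU : U ∈ N.invtSubmodule) {j : ℕ} (hjU : U.map (N ^ (j + 1)) ≤ K) (i : ℕ)
    (hij : j < 2 * i) : K ⊔ U.map (N ^ i) ≤ U ⊓ K.comap (N ^ i) := by
  refine sup_le (le_inf hKU fun x hx => pow_apply_mem_of_mem_invtSubmodule hK i hx) ?_
  rintro _ ⟨x, hx, rfl⟩
  refine ⟨pow_apply_mem_of_mem_invtSubmodule hU i hx, show (N ^ i) ((N ^ i) x) ∈ K from ?_⟩
  rw [← mul_apply, ← pow_add]
  exact pow_apply_mem_of_map_pow_le hK hjU (by omega) hx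

end Invariant

/-- A monodromy filtration of `N` on the subquotient `U / K`, recorded by the preimages in `V`
of its steps. -/
structure IsMonodromyFiltrationOn {R V : Type*} [Ring R] [AddCommGroup V] [Module R V]
    (N : Module.End R V) (K U : Submodule R V) (M : ℤ → Submodule R V) : Prop where
  monotone : Monotone M
  exists_eq_lower : ∃ a : ℤ, ∀ w ≤ a, M w = K
  exists_eq_upper : ∃ b : ℤ, ∀ w, b ≤ w → M w = U
  map_le : ∀ w, (M w).map N ≤ M (w - 2)
  pow_injective : ∀ m : ℕ, ∀ x ∈ M m, (N ^ m) x ∈ M (-m - 1) → x ∈ M (m - 1)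
  pow_surjective : ∀ m : ℕ, ∀ y ∈ M (-m), ∃ x ∈ M m, y - (N ^ m) x ∈ M (-m - 1)

theorem isMonodromyFiltration_iff_isMonodromyFiltrationOn {E V : Type*} [Field E]
    [AddCommGroup V] [Module E V] {N : V →ₗ[E] V} {M : ℤ → Submodule E V} :
    IsMonodromyFiltration N M ↔ IsMonodromyFiltrationOn N ⊥ ⊤ M :=
  ⟨fun ⟨⟨h₁, h₂, h₃⟩, h₄, h₅⟩ => ⟨h₁, h₂, h₃, h₄, fun m => (h₅ m).1, fun m => (h₅ m).2⟩,
    fun h => ⟨⟨h.1, h.2, h.3⟩, h.4, fun m => ⟨h.5 m, h.6 m⟩⟩⟩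

namespace IsMonodromyFiltrationOn

variable {R V : Type*} [Ring R] [AddCommGroup V] [Module R V] {N : Module.End R V}
  {K U : Submodule R V} {M : ℤ → Submodule R V} {k : ℕ}

theorem lower_le (hM : IsMonodromyFiltrationOn N K U M) (w : ℤ) : K ≤ M w := by
  obtain ⟨a, ha⟩ := hM.exists_eq_lower
  exact ha _ (min_le_right w a) ▸ hM.monotone (min_le_left w a)

theorem le_upper (hM : IsMonodromyFiltrationOn N K U M) (w : ℤ) : M w ≤ U := by
  obtain ⟨b, hb⟩ := hM.exists_eq_upper
  exact hb _ (le_max_right w b) ▸ hM.monotone (le_max_left w b)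

theorem lower_mem_invtSubmodule (hM : IsMonodromyFiltrationOn N K U M) :
    K ∈ N.invtSubmodule := by
  obtain ⟨a, ha⟩ := hM.exists_eq_lower
  rw [mem_invtSubmodule_iff_map_le, ← ha a le_rfl]
  exact (hM.map_le a).trans (hM.monotone (by omega))

theorem pow_apply_mem (hM : IsMonodromyFiltrationOn N K U M) {w : ℤ} {x : V} (hx : x ∈ M w)
    (j : ℕ) : (N ^ j) x ∈ M (w - 2 * j) := by
  induction j with
  | zero => simpa using hx
  | succ j ih =>
    rw [pow_succ', mul_apply, Nat.cast_succ, show w - 2 * (j + 1) = w - 2 * j - 2 by ring]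
    exact hM.map_le _ (mem_map_of_mem ih)

theorem eq_upper (hM : IsMonodromyFiltrationOn N K U M) (hkU : U.map (N ^ (k + 1)) ≤ K)
    {w : ℤ} (hw : k ≤ w) : M w = U := by
  have step : ∀ w, (k : ℤ) < w → M w ≤ M (w - 1) := by
    intro w hw x hx
    obtain ⟨m, rfl⟩ : ∃ m : ℕ, w = m := ⟨w.toNat, by omega⟩
    refine hM.pow_injective m x hx (hM.lower_le _ ?_)
    exact pow_apply_mem_of_map_pow_le hM.lower_mem_invtSubmodule hkU (by omega) (hM.le_upper _ hx)
  obtain ⟨b, hb⟩ := hM.exists_eq_upper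
  rw [hM.monotone.eq_of_forall_gt_le_sub_one step hw, ← hb _ (le_max_right (k : ℤ) b),
    hM.monotone.eq_of_forall_gt_le_sub_one step (le_max_left _ b)]

theorem eq_lower (hM : IsMonodromyFiltrationOn N K U M) (hkU : U.map (N ^ (k + 1)) ≤ K)
    {w : ℤ} (hw : w < -k) : M w = K := by
  have step : ∀ w ≤ -(k : ℤ) - 1, M w ≤ M (w - 1) := by
    intro w hw y hy
    obtain ⟨m, rfl⟩ : ∃ m : ℕ, w = -m := ⟨(-w).toNat, by omega⟩
    obtain ⟨x, hx, hxy⟩ := hM.pow_surjective m y hy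
    have hNx : (N ^ m) x ∈ M (-m - 1) := hM.lower_le _ <|
      pow_apply_mem_of_map_pow_le hM.lower_mem_invtSubmodule hkU (by omega) (hM.le_upper _ hx)
    simpa using add_mem hxy hNx
  obtain ⟨a, ha⟩ := hM.exists_eq_lower
  rw [hM.monotone.eq_of_forall_le_le_sub_one step (by omega : w ≤ -k - 1),
    ← ha _ (min_le_right (-(k : ℤ) - 1) a),
    hM.monotone.eq_of_forall_le_le_sub_one step (min_le_left _ a)]

theorem eq_inf_comap (hM : IsMonodromyFiltrationOn N K U M) (hkU : U.map (N ^ (k + 1)) ≤ K) :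
    M (k - 1) = U ⊓ K.comap (N ^ k) := by
  apply le_antisymm
  · intro x hx
    refine ⟨hM.le_upper _ hx, show (N ^ k) x ∈ K from ?_⟩
    rw [← hM.eq_lower hkU (by omega : (k : ℤ) - 1 - 2 * k < -k)]
    exact hM.pow_apply_mem hx k
  · rintro x ⟨hxU, hxK⟩
    refine hM.pow_injective k x (by rwa [hM.eq_upper hkU le_rfl]) ?_
    rwa [hM.eq_lower hkU (by omega)]

theorem eq_sup_map (hM : IsMonodromyFiltrationOn N K U M) (hkU : U.map (N ^ (k + 1)) ≤ K) :
    M (-k) = K ⊔ U.map (N ^ k) := by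
  apply le_antisymm
  · intro y hy
    obtain ⟨x, hx, hxy⟩ := hM.pow_surjective k y hy
    rw [hM.eq_lower hkU (by omega)] at hxy
    rw [← sub_add_cancel y ((N ^ k) x)]
    exact add_mem_sup hxy (mem_map_of_mem (hM.le_upper _ hx))
  · refine sup_le (hM.lower_le _) ?_
    rintro _ ⟨x, hx, rfl⟩
    rw [← hM.eq_upper hkU le_rfl] at hx
    simpa [two_mul] using hM.pow_apply_mem hx k

theorem clamp (hM : IsMonodromyFiltrationOn N K U M) (k : ℕ) :
    IsMonodromyFiltrationOn N (M (-k - 1)) (M k) (fun w => M (max (-k - 1) (min k w))) where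
  monotone := hM.monotone.comp fun _ _ h => max_le_max le_rfl (min_le_min le_rfl h)
  exists_eq_lower := ⟨-k - 1, fun w hw => congrArg M (by omega)⟩
  exists_eq_upper := ⟨k, fun w hw => congrArg M (by omega)⟩
  map_le w := (hM.map_le _).trans (hM.monotone (by omega))
  pow_injective m x hx hNx := by
    by_cases hm : m ≤ k
    · rw [show max (-(k : ℤ) - 1) (min k m) = m by omega] at hx
      rw [show max (-(k : ℤ) - 1) (min k (-m - 1)) = -m - 1 by omega] at hNx
      rw [show max (-(k : ℤ) - 1) (min k (m - 1)) = m - 1 by omega]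
      exact hM.pow_injective m x hx hNx
    · convert hx using 2
      omega
  pow_surjective m y hy := by
    by_cases hm : m ≤ k
    · rw [show max (-(k : ℤ) - 1) (min k (-m)) = -m by omega] at hy
      rw [show max (-(k : ℤ) - 1) (min k m) = m by omega,
        show max (-(k : ℤ) - 1) (min k (-m - 1)) = -m - 1 by omega]
      exact hM.pow_surjective m y hy
    · refine ⟨0, zero_mem _, ?_⟩
      rw [map_zero, sub_zero]
      convert hy using 2
      omega

theorem unique (hkU : U.map (N ^ (k + 1)) ≤ K) {M₁ M₂ : ℤ → Submodule R V}
    (h₁ : IsMonodromyFiltrationOn N K U M₁) (h₂ : IsMonodromyFiltrationOn N K U M₂) :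
    M₁ = M₂ := by
  induction k generalizing K U M₁ M₂ with
  | zero =>
    funext w
    rcases le_or_gt 0 w with hw | hw
    · rw [h₁.eq_upper hkU (by simpa using hw), h₂.eq_upper hkU (by simpa using hw)]
    · rw [h₁.eq_lower hkU (by simpa using hw), h₂.eq_lower hkU (by simpa using hw)]
  | succ k ih =>
    have truncate : ∀ M, IsMonodromyFiltrationOn N K U M → IsMonodromyFiltrationOn N
        (K ⊔ U.map (N ^ (k + 1))) (U ⊓ K.comap (N ^ (k + 1)))
        (fun w => M (max (-k - 1) (min k w))) := by
      intro M hM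
      convert hM.clamp k using 1
      · rw [← hM.eq_sup_map hkU, Nat.cast_succ, neg_add']
      · rw [← hM.eq_inf_comap hkU, Nat.cast_succ, add_sub_cancel_right]
    have hclamp := ih (map_inf_comap_le_sup_map _ K U) (truncate M₁ h₁) (truncate M₂ h₂)
    funext w
    rcases lt_or_ge (k : ℤ) w with hw | hw
    · rw [h₁.eq_upper hkU (by push_cast; omega), h₂.eq_upper hkU (by push_cast; omega)]
    rcases lt_or_ge w (-k - 1) with hw' | hw'
    · rw [h₁.eq_lower hkU (by push_cast; omega), h₂.eq_lower hkU (by push_cast; omega)]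
    have := congrFun hclamp w
    rwa [show max (-(k : ℤ) - 1) (min k w) = w by omega] at this

end IsMonodromyFiltrationOn

section Existence

variable {R V : Type*} [Ring R] [AddCommGroup V] [Module R V] {N : Module.End R V}
  {K U K' U' : Submodule R V} {M : ℤ → Submodule R V} {k : ℕ}

theorem isMonodromyFiltrationOn_of_map_le (hKU : K ≤ U) (hK : K ∈ N.invtSubmodule)
    (hNU : U.map N ≤ K) : IsMonodromyFiltrationOn N K U (fun w => if 0 ≤ w then U else K) where
  monotone a b hab := by
    beta_reduce
    split_ifs with ha hb hb
    · exact le_rfl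
    · omega
    · exact hKU
    · exact le_rfl
  exists_eq_lower := ⟨-1, fun w hw => if_neg (by omega)⟩
  exists_eq_upper := ⟨0, fun w hw => if_pos hw⟩
  map_le w := by
    split_ifs with hw hw'
    · exact hNU.trans hKU
    · exact hNU
    · omega
    · exact (mem_invtSubmodule_iff_map_le N).mp hK
  pow_injective m x hx hNx := by
    rcases m with _ | m
    · simpa using hNx
    · rw [if_pos (by omega)] at hx ⊢
      exact hx
  pow_surjective m y hy := by
    rcases m with _ | m
    · exact ⟨y, by simpa using hy, by simp⟩
    · rw [if_neg (by omega)] at hy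
      exact ⟨0, zero_mem _, by rwa [map_zero, sub_zero, if_neg (by omega)]⟩

def extendFiltration (K U : Submodule R V) (k : ℕ) (M : ℤ → Submodule R V) (w : ℤ) :
    Submodule R V :=
  if (k : ℤ) < w then U else if w < -k - 1 then K else M w

theorem extendFiltration_of_lt {w : ℤ} (hw : (k : ℤ) < w) : extendFiltration K U k M w = U :=
  if_pos hw

theorem extendFiltration_of_lt_neg {w : ℤ} (hw : w < -k - 1) :
    extendFiltration K U k M w = K := by
  rw [extendFiltration, if_neg (by omega), if_pos hw]

theorem extendFiltration_of_mem {w : ℤ} (h₁ : -k - 1 ≤ w) (h₂ : w ≤ k) :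
    extendFiltration K U k M w = M w := by
  rw [extendFiltration, if_neg (by omega), if_neg (by omega)]

theorem IsMonodromyFiltrationOn.extendFiltration_monotone
    (hM : IsMonodromyFiltrationOn N K' U' M) (hK : K ≤ K') (hU : U' ≤ U) :
    Monotone (extendFiltration K U k M) := by
  intro a b hab
  unfold extendFiltration
  split_ifs <;> first
    | omega
    | exact le_rfl
    | exact hM.monotone hab
    | exact hK.trans (hM.lower_le _)
    | exact (hM.le_upper _).trans hU
    | exact hK.trans ((hM.lower_le 0).trans ((hM.le_upper 0).trans hU))

theorem IsMonodromyFiltrationOn.extendFiltration_le (hM : IsMonodromyFiltrationOn N K' U' M)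
    (hK : K ≤ K') (hU : U' ≤ U) (w : ℤ) : extendFiltration K U k M w ≤ U := by
  unfold extendFiltration
  split_ifs
  exacts [le_rfl, hK.trans ((hM.lower_le 0).trans ((hM.le_upper 0).trans hU)),
    (hM.le_upper w).trans hU]

theorem IsMonodromyFiltrationOn.map_extendFiltration_le
    (hM : IsMonodromyFiltrationOn N (K ⊔ U.map (N ^ (k + 1))) (U ⊓ K.comap (N ^ (k + 1))) M)
    (hK : K ∈ N.invtSubmodule) (hU : U ∈ N.invtSubmodule) (hkU : U.map (N ^ (k + 2)) ≤ K)
    (w : ℤ) :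
    (extendFiltration K U k M w).map N ≤ extendFiltration K U k M (w - 2) := by
  have hkU' := map_inf_comap_le_sup_map (N ^ (k + 1)) K U
  rintro _ ⟨x, hx, rfl⟩
  rcases lt_or_ge (k : ℤ) (w - 2) with h | h
  · rw [extendFiltration_of_lt h]
    exact hU (hM.extendFiltration_le le_sup_left inf_le_left w hx)
  rcases lt_or_ge (w - 2) (-k - 1) with h' | h'
  · rw [extendFiltration_of_lt_neg h']
    have hx' := hM.extendFiltration_monotone le_sup_left inf_le_left (show w ≤ -k by omega) hx
    rw [extendFiltration_of_mem (w := -k) (by omega) (by omega), hM.eq_sup_map hkU'] at hx'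
    have hNK : ((K ⊔ U.map (N ^ (k + 1))) ⊔ (U ⊓ K.comap (N ^ (k + 1))).map (N ^ k)).map N
        ≤ K := by
      simp only [Submodule.map_sup, ← map_comp, ← mul_eq_comp, ← pow_succ']
      exact sup_le (sup_le ((mem_invtSubmodule_iff_map_le N).mp hK) hkU)
        (map_le_iff_le_comap.mpr inf_le_right)
    exact hNK (mem_map_of_mem hx')
  rw [extendFiltration_of_mem h' h]
  rcases lt_or_ge (k : ℤ) w with hw | hw
  · rw [extendFiltration_of_lt hw] at hx
    refine hM.monotone (show (k : ℤ) - 1 ≤ w - 2 by omega) ?_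
    rw [hM.eq_inf_comap hkU']
    refine ⟨⟨hU hx, show (N ^ (k + 1)) (N x) ∈ K from ?_⟩,
      show (N ^ k) (N x) ∈ K ⊔ U.map (N ^ (k + 1)) from ?_⟩
    · rw [← mul_apply, ← pow_succ]
      exact hkU (mem_map_of_mem hx)
    · rw [← mul_apply, ← pow_succ]
      exact mem_sup_right (mem_map_of_mem hx)
  · rw [extendFiltration_of_mem (by omega) hw] at hx
    exact hM.map_le w (mem_map_of_mem hx)

theorem IsMonodromyFiltrationOn.extendFiltration
    (hM : IsMonodromyFiltrationOn N (K ⊔ U.map (N ^ (k + 1))) (U ⊓ K.comap (N ^ (k + 1))) M)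
    (hK : K ∈ N.invtSubmodule) (hU : U ∈ N.invtSubmodule) (hkU : U.map (N ^ (k + 2)) ≤ K) :
    IsMonodromyFiltrationOn N K U (extendFiltration K U k M) := by
  have hkU' := map_inf_comap_le_sup_map (N ^ (k + 1)) K U
  refine ⟨hM.extendFiltration_monotone le_sup_left inf_le_left,
    ⟨-k - 2, fun w hw => extendFiltration_of_lt_neg (by omega)⟩,
    ⟨k + 1, fun w hw => extendFiltration_of_lt (by omega)⟩,
    hM.map_extendFiltration_le hK hU hkU, ?_, ?_⟩
  · intro m x hx hNx
    rcases le_or_gt m k with hm | hm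
    · rw [extendFiltration_of_mem (by omega) (by omega)] at hx hNx ⊢
      exact hM.pow_injective m x hx hNx
    rw [extendFiltration_of_lt (by omega)] at hx
    rcases (Nat.succ_le_of_lt hm).eq_or_lt with rfl | hm
    · rw [extendFiltration_of_lt_neg (by omega)] at hNx
      rw [extendFiltration_of_mem (by omega) (by omega), hM.eq_upper hkU' (by omega)]
      exact ⟨hx, hNx⟩
    · rwa [extendFiltration_of_lt (by omega)]
  · intro m y hy
    rcases le_or_gt m k with hm | hm
    · rw [extendFiltration_of_mem (by omega) (by omega)] at hy
      rw [extendFiltration_of_mem (w := m) (by omega) (by omega),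
        extendFiltration_of_mem (w := -m - 1) (by omega) (by omega)]
      exact hM.pow_surjective m y hy
    rcases (Nat.succ_le_of_lt hm).eq_or_lt with rfl | hm
    · rw [extendFiltration_of_mem (by omega) (by omega), hM.eq_lower hkU' (by omega)] at hy
      obtain ⟨a, ha, _, ⟨x, hx, rfl⟩, rfl⟩ := mem_sup.mp hy
      refine ⟨x, by rwa [extendFiltration_of_lt (by omega)], ?_⟩
      rwa [add_sub_cancel_right, extendFiltration_of_lt_neg (by omega)]
    · rw [extendFiltration_of_lt_neg (by omega)] at hy
      exact ⟨0, zero_mem _, by rwa [map_zero, sub_zero, extendFiltration_of_lt_neg (by omega)]⟩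

theorem exists_isMonodromyFiltrationOn (k : ℕ) (hKU : K ≤ U) (hK : K ∈ N.invtSubmodule)
    (hU : U ∈ N.invtSubmodule) (hkU : U.map (N ^ (k + 1)) ≤ K) :
    ∃ M, IsMonodromyFiltrationOn N K U M := by
  induction k generalizing K U with
  | zero => exact ⟨_, isMonodromyFiltrationOn_of_map_le hKU hK (by simpa using hkU)⟩
  | succ k ih =>
    obtain ⟨M, hM⟩ := ih (sup_map_pow_le_inf_comap_pow hKU hK hU hkU (k + 1) (by omega))
      (sup_map_pow_mem_invtSubmodule hK hU _) (inf_comap_pow_mem_invtSubmodule hK hU _)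
      (map_inf_comap_le_sup_map _ K U)
    exact ⟨_, hM.extendFiltration hK hU hkU⟩

end Existence

theorem monodromy_filtration_exists_unique_general
    {E V : Type*} [Field E] [AddCommGroup V] [Module E V]
    (N : V →ₗ[E] V) (hN : IsNilpotent N) :
    ∃! M : ℤ → Submodule E V, IsMonodromyFiltration N M := by
  obtain ⟨k, hk⟩ := hN
  have hkV : (⊤ : Submodule E V).map (N ^ (k + 1)) ≤ ⊥ := by simp [pow_succ, hk]
  simp only [isMonodromyFiltration_iff_isMonodromyFiltrationOn]
  obtain ⟨M, hM⟩ := exists_isMonodromyFiltrationOn k bot_le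
    (invtSubmodule.bot_mem N) (invtSubmodule.top_mem N) hkV
  exact ⟨M, hM, fun M' hM' => hM'.unique hkV hM⟩

/-- Existence and uniqueness of the monodromy weight filtration of a nilpotent
operator on a finite-dimensional vector space over a field of characteristic 0. -/
theorem monodromy_filtration_exists_unique
    {E V : Type*} [Field E] [CharZero E] [AddCommGroup V] [Module E V]
    [FiniteDimensional E V] (N : V →ₗ[E] V) (hN : IsNilpotent N) :
    ∃! M : ℤ → Submodule E V, IsMonodromyFiltration N M :=
  monodromy_filtration_exists_unique_general N hN
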